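/- arXiv:1009.4610 — 3 statements merged into one kernel-verified Lean document; each statement's English description precedes it below -/
import Mathlib

section
/- Let H = [H1; H2] be a binary matrix, S uniform on the set of attainable syndromes of H2 restricted to ker H1, X uniform on the coset {x : H1 x = 0, H2 x = S} given S, and Z the output of passing X through a binary erasure channel. Then H(X | S, Z) = H(X | S = 0, Z), i.e., the conditional entropy of X given S and Z equals the conditional entropy computed under the event S = 0. -/
open Finset

/-- Transition probability of a memoryless binary erasure channel with erasure
probability `ε`: input `x`, output `z` (where `none` denotes an erasure). -/
noncomputable def becProb (ε : ℝ) (n : ℕ) (x : Fin n → ZMod 2)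
    (z : Fin n → Option (ZMod 2)) : ℝ :=
  ∏ i, (match z i with
        | none => ε
        | some b => if b = x i then 1 - ε else 0)

/-- Conditional probability of the transmitted word `x` given syndrome `s` in coset
encoding: uniform over the `2^k` solutions of `H1 x = 0, H2 x = s`. -/
noncomputable def cosetProb {n m1 m2 : ℕ} (H1 : Matrix (Fin m1) (Fin n) (ZMod 2))
    (H2 : Matrix (Fin m2) (Fin n) (ZMod 2)) (k : ℕ) (s : Fin m2 → ZMod 2)
    (x : Fin n → ZMod 2) : ℝ :=
  if H1.mulVec x = 0 ∧ H2.mulVec x = s then ((2 : ℝ) ^ k)⁻¹ else 0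

/-- Shift equivalence on BEC outputs induced by adding a fixed word `a`. -/
noncomputable def zShift (n : ℕ) (a : Fin n → ZMod 2) :
    (Fin n → Option (ZMod 2)) ≃ (Fin n → Option (ZMod 2)) where
  toFun z := fun i => Option.map (· + a i) (z i)
  invFun z := fun i => Option.map (· + a i) (z i)
  left_inv z := by
    funext i
    cases hz : z i <;> simp [hz, add_assoc, CharTwo.add_self_eq_zero]
  right_inv z := by
    funext i
    cases hz : z i <;> simp [hz, add_assoc, CharTwo.add_self_eq_zero]

lemma becProb_shift (ε : ℝ) (n : ℕ) (x a : Fin n → ZMod 2)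
    (z : Fin n → Option (ZMod 2)) :
    becProb ε n x z = becProb ε n (x + a) (zShift n a z) := by
  unfold becProb
  refine Finset.prod_congr rfl fun i _ => ?_
  have hzs : zShift n a z i = Option.map (· + a i) (z i) := rfl
  rw [hzs]
  cases z i with
  | none => rfl
  | some b =>
    simp only [Option.map_some, Pi.add_apply]
    simp [add_left_inj]

lemma cosetProb_shift {n m1 m2 : ℕ} (H1 : Matrix (Fin m1) (Fin n) (ZMod 2))
    (H2 : Matrix (Fin m2) (Fin n) (ZMod 2)) (k : ℕ) (s : Fin m2 → ZMod 2)
    (a : Fin n → ZMod 2) (h1 : H1.mulVec a = 0) (h2 : H2.mulVec a = s)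
    (x : Fin n → ZMod 2) :
    cosetProb H1 H2 k s x = cosetProb H1 H2 k 0 (x + a) := by
  unfold cosetProb
  congr 1
  rw [eq_iff_iff]
  rw [Matrix.mulVec_add, Matrix.mulVec_add, h1, h2, add_zero]
  constructor
  · rintro ⟨hA, hB⟩
    refine ⟨hA, ?_⟩
    rw [hB]
    funext i
    exact CharTwo.add_self_eq_zero _
  · rintro ⟨hA, hB⟩
    refine ⟨hA, ?_⟩
    have : H2.mulVec x + s + s = s := by rw [hB]; simp
    rwa [add_assoc, (show s + s = 0 from funext fun i => CharTwo.add_self_eq_zero _),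
      add_zero] at this

/-- For coset encoding over the BEC, the conditional entropy
`H(X | S, Z)` equals the conditional entropy `H(X | Z)` computed under the event
`S = 0`.  Entropies are expressed through `Real.negMulLog` as differences of joint
entropies: `H(X|S,Z) = H(S,X,Z) - H(S,Z)` and
`H(X|S=0,Z) = H(X,Z | S=0) - H(Z | S=0)`. -/
theorem coset_encoding_cond_entropy_eq_zero_syndrome
    (n m1 m2 k : ℕ) (ε : ℝ) (hε : ε ∈ Set.Icc (0 : ℝ) 1)
    (H1 : Matrix (Fin m1) (Fin n) (ZMod 2)) (H2 : Matrix (Fin m2) (Fin n) (ZMod 2))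
    (hsol : ∀ s : Fin m2 → ZMod 2,
      (Finset.univ.filter
        (fun x : Fin n → ZMod 2 => H1.mulVec x = 0 ∧ H2.mulVec x = s)).card = 2 ^ k) :
    -- joint pmf p(s,x,z) = P(S=s) P(X=x|S=s) P(Z=z|X=x), with S uniform
    (let p : (Fin m2 → ZMod 2) → (Fin n → ZMod 2) → (Fin n → Option (ZMod 2)) → ℝ :=
      fun s x z => ((2 : ℝ) ^ m2)⁻¹ * cosetProb H1 H2 k s x * becProb ε n x z
     let q : (Fin n → ZMod 2) → (Fin n → Option (ZMod 2)) → ℝ :=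
      fun x z => cosetProb H1 H2 k 0 x * becProb ε n x z
     -- H(X | S, Z)
     ((∑ s, ∑ x, ∑ z, Real.negMulLog (p s x z)) -
        (∑ s, ∑ z, Real.negMulLog (∑ x, p s x z)))
     -- = H(X | S = 0, Z)
     = ((∑ x, ∑ z, Real.negMulLog (q x z)) -
        (∑ z, Real.negMulLog (∑ x, q x z)))) := by
  intro p q
  classical
  set c : ℝ := ((2 : ℝ) ^ m2)⁻¹ with hc
  have hp : ∀ s x z, p s x z = c * cosetProb H1 H2 k s x * becProb ε n x z := fun _ _ _ => rfl
  have hq : ∀ x z, q x z = cosetProb H1 H2 k 0 x * becProb ε n x z := fun _ _ => rfl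
  -- choose a solution for each syndrome
  have hxs : ∀ s : Fin m2 → ZMod 2, ∃ a, H1.mulVec a = 0 ∧ H2.mulVec a = s := by
    intro s
    have h := hsol s
    have hpos : 0 < (Finset.univ.filter
        (fun x : Fin n → ZMod 2 => H1.mulVec x = 0 ∧ H2.mulVec x = s)).card := by
      rw [h]; positivity
    obtain ⟨a, ha⟩ := Finset.card_pos.mp hpos
    exact ⟨a, (Finset.mem_filter.mp ha).2⟩
  choose xs h1s h2s using hxs
  -- key pointwise identity
  have key : ∀ s x z, p s x z = c * q (x + xs s) (zShift n (xs s) z) := by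
    intro s x z
    rw [hp, hq, cosetProb_shift H1 H2 k s (xs s) (h1s s) (h2s s) x,
      becProb_shift ε n x (xs s) z, mul_assoc]
  -- reindexed sums
  have hA : ∀ s, (∑ x, ∑ z, Real.negMulLog (p s x z))
      = ∑ x, ∑ z, Real.negMulLog (c * q x z) := by
    intro s
    refine Fintype.sum_equiv (Equiv.addRight (xs s)) _ _ fun x => ?_
    refine Fintype.sum_equiv (zShift n (xs s)) _ _ fun z => ?_
    rw [key]
    rfl
  have hB : ∀ s, (∑ z, Real.negMulLog (∑ x, p s x z))
      = ∑ z, Real.negMulLog (∑ x, c * q x z) := by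
    intro s
    refine Fintype.sum_equiv (zShift n (xs s)) _ _ fun z => ?_
    congr 1
    refine Fintype.sum_equiv (Equiv.addRight (xs s)) _ _ fun x => ?_
    rw [key]
    rfl
  have hcard : (Fintype.card (Fin m2 → ZMod 2) : ℝ) = (2 : ℝ) ^ m2 := by
    simp [Fintype.card_fun]
  have hsumA : (∑ s : Fin m2 → ZMod 2, ∑ x, ∑ z, Real.negMulLog (p s x z))
      = (2 : ℝ) ^ m2 * ∑ x, ∑ z, Real.negMulLog (c * q x z) := by
    rw [Finset.sum_congr rfl (fun s _ => hA s), Finset.sum_const, nsmul_eq_mul,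
      Finset.card_univ, hcard]
  have hsumB : (∑ s : Fin m2 → ZMod 2, ∑ z, Real.negMulLog (∑ x, p s x z))
      = (2 : ℝ) ^ m2 * ∑ z, Real.negMulLog (∑ x, c * q x z) := by
    rw [Finset.sum_congr rfl (fun s _ => hB s), Finset.sum_const, nsmul_eq_mul,
      Finset.card_univ, hcard]
  rw [hsumA, hsumB]
  -- expand negMulLog of the product
  have expandA : (∑ x, ∑ z, Real.negMulLog (c * q x z))
      = (∑ x, ∑ z, q x z) * Real.negMulLog c + c * ∑ x, ∑ z, Real.negMulLog (q x z) := by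
    rw [Finset.sum_mul, Finset.mul_sum]
    rw [← Finset.sum_add_distrib]
    refine Finset.sum_congr rfl fun x _ => ?_
    rw [Finset.sum_mul, Finset.mul_sum, ← Finset.sum_add_distrib]
    refine Finset.sum_congr rfl fun z _ => ?_
    rw [Real.negMulLog_mul]
  have expandB : (∑ z, Real.negMulLog (∑ x, c * q x z))
      = (∑ z, ∑ x, q x z) * Real.negMulLog c + c * ∑ z, Real.negMulLog (∑ x, q x z) := by
    rw [Finset.sum_mul, Finset.mul_sum, ← Finset.sum_add_distrib]
    refine Finset.sum_congr rfl fun z _ => ?_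
    rw [← Finset.mul_sum, Real.negMulLog_mul]
  rw [expandA, expandB, Finset.sum_comm]
  have h2m : (2 : ℝ) ^ m2 ≠ 0 := by positivity
  have hcc : (2 : ℝ) ^ m2 * c = 1 := mul_inv_cancel₀ h2m
  linear_combination ((∑ x, ∑ z, Real.negMulLog (q x z)) -
    ∑ z, Real.negMulLog (∑ x, q x z)) * hcc
end

section
/- With E defined as the set of pairs ((Σ l1 Λ_{l1 l2} σ(l1,l2))/Λ'_1(1,1), (Σ l2 Λ_{l1 l2} σ(l1,l2))/Λ'_2(1,1)) over σ : supp(Λ) → [0,1]: order the distinct values of l1/l2 on supp(Λ) decreasingly as v_1 > ... > v_D, let σ_d be the indicator of {(l1,l2) : l1/l2 = v_d} and p_d the corresponding point of E. Then E equals the region of [0,1]^2 bounded below by the piecewise linear path through (0,0), p_1, p_1+p_2, ..., (1,1) and above by the piecewise linear path through (0,0), p_D, p_D + p_{D−1}, ..., (1,1). -/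
open Finset in
private lemma finsum2_eq_sum (Lam : ℕ → ℕ → ℝ)
    (hfin : (Function.support (Function.uncurry Lam)).Finite)
    (f : ℕ → ℕ → ℝ) (hf : ∀ l1 l2, Lam l1 l2 = 0 → f l1 l2 = 0) :
    (∑ᶠ (l1 : ℕ), ∑ᶠ (l2 : ℕ), f l1 l2) = ∑ x ∈ hfin.toFinset, f x.1 x.2 := by
  classical
  set A := hfin.toFinset with hA
  have hmem : ∀ x : ℕ × ℕ, x ∈ A ↔ Lam x.1 x.2 ≠ 0 := by
    intro x
    simp [hA, Function.uncurry, Set.Finite.mem_toFinset, Function.mem_support]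
  set s1 := A.image Prod.fst with hs1
  set s2 := A.image Prod.snd with hs2
  have h2 : ∀ l1, (∑ᶠ l2, f l1 l2) = ∑ l2 ∈ s2, f l1 l2 := by
    intro l1
    apply finsum_eq_finset_sum_of_support_subset
    intro l2 hl2
    have hL : Lam l1 l2 ≠ 0 := fun h => hl2 (hf _ _ h)
    exact Finset.mem_coe.mpr (Finset.mem_image.mpr ⟨(l1, l2), (hmem _).mpr hL, rfl⟩)
  rw [finsum_congr h2]
  rw [finsum_eq_finset_sum_of_support_subset _ (s := s1) ?sub]
  case sub =>
    intro l1 hl1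
    simp only [Function.mem_support] at hl1
    obtain ⟨l2, _, hne⟩ := Finset.exists_ne_zero_of_sum_ne_zero hl1
    have hL : Lam l1 l2 ≠ 0 := fun h => hne (hf _ _ h)
    exact Finset.mem_coe.mpr (Finset.mem_image.mpr ⟨(l1,l2), (hmem _).mpr hL, rfl⟩)
  rw [show (∑ i ∈ s1, ∑ l2 ∈ s2, f i l2) = ∑ x ∈ s1 ×ˢ s2, f x.1 x.2 from
    (Finset.sum_product (s := s1) (t := s2) (f := fun x : ℕ × ℕ => f x.1 x.2)).symm]
  symm
  apply Finset.sum_subset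
  · intro x hx
    exact Finset.mem_product.mpr ⟨Finset.mem_image.mpr ⟨x, hx, rfl⟩,
      Finset.mem_image.mpr ⟨x, hx, rfl⟩⟩
  · intro x _ hx
    exact hf x.1 x.2 (not_not.mp (fun h => hx ((hmem x).mpr h)))

private lemma exists_seg (c : ℕ → ℝ) (X : ℝ) :
    ∀ D : ℕ, 0 < D → c 0 ≤ X → X ≤ c D → ∃ d < D, c d ≤ X ∧ X ≤ c (d + 1) := by
  intro D
  induction D with
  | zero => omega
  | succ n ih =>
    intro _ h0 hD
    by_cases hc : c n ≤ X
    · exact ⟨n, Nat.lt_succ_self n, hc, hD⟩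
    · push_neg at hc
      rcases Nat.eq_zero_or_pos n with hn | hn
      · subst hn; linarith
      · obtain ⟨d, hd, h⟩ := ih hn h0 hc.le
        exact ⟨d, Nat.lt_succ_of_lt hd, h⟩

private lemma sum_range_ite (d D : ℕ) (hd : d ≤ D) (g : ℕ → ℝ) :
    (∑ e ∈ Finset.range D, (if e < d then g e else 0)) = ∑ e ∈ Finset.range d, g e := by
  rw [← Finset.sum_subset (Finset.range_subset_range.mpr hd)
    (by intro x hx hx2; simp only [Finset.mem_range] at *; rw [if_neg]; omega)]
  apply Finset.sum_congr rfl
  intro x hx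
  rw [if_pos (Finset.mem_range.mp hx)]

private lemma support_line_lower (D d : ℕ) (hd : d < D) (a b t : ℕ → ℝ)
    (ha : ∀ e < D, 0 < a e)
    (hsl : ∀ e f, e < f → f < D → b e * a f < b f * a e)
    (ht : ∀ e, t e ∈ Set.Icc (0 : ℝ) 1) :
    (∑ e ∈ Finset.range d, b e) +
      (b d / a d) * ((∑ e ∈ Finset.range D, t e * a e) - ∑ e ∈ Finset.range d, a e)
      ≤ ∑ e ∈ Finset.range D, t e * b e := by
  set s := b d / a d with hs
  have had : (0:ℝ) < a d := ha d hd
  have key : (0:ℝ) ≤ ∑ e ∈ Finset.range D,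
      (t e * b e - (if e < d then b e else 0) - s * (t e * a e - (if e < d then a e else 0))) := by
    apply Finset.sum_nonneg
    intro e he
    have heD := Finset.mem_range.mp he
    have hae := ha e heD
    obtain ⟨ht0, ht1⟩ := ht e
    by_cases hed : e < d
    · rw [if_pos hed, if_pos hed]
      have h1 : b e * a d < b d * a e := hsl e d hed hd
      have h2 : b e < s * a e := by
        rw [hs, div_mul_eq_mul_div, lt_div_iff₀ had]; linarith
      nlinarith [mul_nonneg (sub_nonneg.mpr ht1) (sub_nonneg.mpr h2.le)]
    · rw [if_neg hed, if_neg hed]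
      push_neg at hed
      rcases eq_or_lt_of_le hed with heq | hlt
      · subst heq
        have hse : s * a d = b d := div_mul_cancel₀ _ had.ne'
        nlinarith
      · have h1 : b d * a e < b e * a d := hsl d e hlt heD
        have h2 : s * a e < b e := by
          rw [hs, div_mul_eq_mul_div, div_lt_iff₀ had]; linarith
        nlinarith
  have e1 := sum_range_ite d D hd.le b
  have e2 := sum_range_ite d D hd.le a
  rw [Finset.sum_sub_distrib, Finset.sum_sub_distrib, e1, ← Finset.mul_sum,
    Finset.sum_sub_distrib, e2] at key
  linarith

private lemma support_line_upper (D d : ℕ) (hd : d < D) (a b t : ℕ → ℝ)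
    (ha : ∀ e < D, 0 < a e)
    (hsl : ∀ e f, e < f → f < D → b f * a e < b e * a f)
    (ht : ∀ e, t e ∈ Set.Icc (0 : ℝ) 1) :
    (∑ e ∈ Finset.range D, t e * b e) ≤
      (∑ e ∈ Finset.range d, b e) +
      (b d / a d) * ((∑ e ∈ Finset.range D, t e * a e) - ∑ e ∈ Finset.range d, a e) := by
  have h := support_line_lower D d hd a (fun e => -b e) t ha
    (by intro e f hef hf; have := hsl e f hef hf
        show -b e * a f < -b f * a e; nlinarith) ht
  simp only [neg_div, neg_mul, mul_neg, Finset.sum_neg_distrib] at h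
  linarith

private lemma point_on_segment (A0 B0 a0 b0 X : ℝ) (ha : 0 < a0)
    (h1 : A0 ≤ X) (h2 : X ≤ A0 + a0) :
    ((X, B0 + b0 / a0 * (X - A0)) : ℝ × ℝ) ∈
      segment ℝ ((A0, B0) : ℝ × ℝ) (A0 + a0, B0 + b0) := by
  have ha' : a0 ≠ 0 := ha.ne'
  have hθ1 : (X - A0) / a0 ≤ 1 := by rw [div_le_one ha]; linarith
  have hθ0 : 0 ≤ (X - A0) / a0 := div_nonneg (by linarith) ha.le
  refine ⟨1 - (X - A0) / a0, (X - A0) / a0, by linarith, hθ0, by ring, ?_⟩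
  apply Prod.ext
  · simp only [Prod.fst_add, Prod.smul_fst, smul_eq_mul]
    field_simp
    ring
  · simp only [Prod.snd_add, Prod.smul_snd, smul_eq_mul]
    field_simp
    ring

private lemma sum_tl (D d : ℕ) (hd : d < D) (θ : ℝ) (a : ℕ → ℝ) :
    ∑ e ∈ Finset.range D, (if e < d then (1:ℝ) else if e = d then θ else 0) * a e
      = (∑ e ∈ Finset.range d, a e) + θ * a d := by
  rw [← Finset.sum_subset (Finset.range_subset_range.mpr (Nat.succ_le_of_lt hd))
    (by intro x hx hx2
        simp only [Finset.mem_range] at *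
        rw [if_neg (by omega), if_neg (by omega), zero_mul])]
  rw [Finset.sum_range_succ, if_neg (lt_irrefl d), if_pos rfl]
  congr 1
  apply Finset.sum_congr rfl
  intro x hx
  rw [if_pos (Finset.mem_range.mp hx), one_mul]

private lemma comb_mem (lam x y : ℝ) (hl : 0 ≤ lam) (hl1 : lam ≤ 1)
    (hx : x ∈ Set.Icc (0:ℝ) 1) (hy : y ∈ Set.Icc (0:ℝ) 1) :
    lam * x + (1 - lam) * y ∈ Set.Icc (0:ℝ) 1 := by
  obtain ⟨hx0, hx1⟩ := hx
  obtain ⟨hy0, hy1⟩ := hy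
  constructor
  · nlinarith
  · nlinarith

/-- The set `E` of normalized edge-count pairs equals the region of
`[0,1]²` between two piecewise linear curves: order the distinct ratio values
`l1/l2` on the support of `Λ` decreasingly as `v 0 > v 1 > ... > v (D-1)`, let
`p d ∈ E` be the point obtained from the indicator `σ_d` of the `d`-th ratio class;
then `E` is the region bounded below by the piecewise linear path through
`(0,0), p 0, p 0 + p 1, …, (1,1)` and above by the path through
`(0,0), p (D-1), p (D-1) + p (D-2), …, (1,1)`. -/
theorem edge_fraction_set_between_piecewise_linear_paths
    (Lam : ℕ → ℕ → ℝ) (D : ℕ) (v : ℕ → ℝ)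
    (hD : 0 < D)
    (hnonneg : ∀ l1 l2, 0 ≤ Lam l1 l2)
    (hfin : (Function.support (Function.uncurry Lam)).Finite)
    (hsum : (∑ᶠ (l1 : ℕ), ∑ᶠ (l2 : ℕ), Lam l1 l2) = 1)
    (hS1 : 0 < ∑ᶠ (l1 : ℕ), ∑ᶠ (l2 : ℕ), (l1 : ℝ) * Lam l1 l2)
    (hS2 : 0 < ∑ᶠ (l1 : ℕ), ∑ᶠ (l2 : ℕ), (l2 : ℝ) * Lam l1 l2)
    (hvdec : ∀ i j, i < j → j < D → v j < v i)
    (hsupp : ∀ l1 l2, Lam l1 l2 ≠ 0 →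
      0 < l1 ∧ 0 < l2 ∧ ∃ d < D, (l1 : ℝ) / (l2 : ℝ) = v d)
    (hattained : ∀ d < D, ∃ l1 l2, Lam l1 l2 ≠ 0 ∧ (l1 : ℝ) / (l2 : ℝ) = v d) :
    (let S1 := ∑ᶠ (l1 : ℕ), ∑ᶠ (l2 : ℕ), (l1 : ℝ) * Lam l1 l2
     let S2 := ∑ᶠ (l1 : ℕ), ∑ᶠ (l2 : ℕ), (l2 : ℝ) * Lam l1 l2
     -- the set E
     let E : Set (ℝ × ℝ) := {q | ∃ σ : ℕ → ℕ → ℝ,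
       (∀ l1 l2, σ l1 l2 ∈ Set.Icc (0 : ℝ) 1) ∧
       q = ((∑ᶠ (l1 : ℕ), ∑ᶠ (l2 : ℕ), (l1 : ℝ) * Lam l1 l2 * σ l1 l2) / S1,
            (∑ᶠ (l1 : ℕ), ∑ᶠ (l2 : ℕ), (l2 : ℝ) * Lam l1 l2 * σ l1 l2) / S2)}
     -- the point of E obtained from the indicator of the d-th ratio class
     let p : ℕ → ℝ × ℝ := fun d =>
       ((∑ᶠ (l1 : ℕ), ∑ᶠ (l2 : ℕ),
            (if (l1 : ℝ) / (l2 : ℝ) = v d then (l1 : ℝ) * Lam l1 l2 else 0)) / S1,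
        (∑ᶠ (l1 : ℕ), ∑ᶠ (l2 : ℕ),
            (if (l1 : ℝ) / (l2 : ℝ) = v d then (l2 : ℝ) * Lam l1 l2 else 0)) / S2)
     -- cumulative vertices of the lower and upper paths
     let cumL : ℕ → ℝ × ℝ := fun m => ∑ d ∈ Finset.range m, p d
     let cumU : ℕ → ℝ × ℝ := fun m => ∑ d ∈ Finset.range m, p (D - 1 - d)
     let lowerPath : Set (ℝ × ℝ) :=
       ⋃ d ∈ Finset.range D, segment ℝ (cumL d) (cumL (d + 1))
     let upperPath : Set (ℝ × ℝ) :=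
       ⋃ d ∈ Finset.range D, segment ℝ (cumU d) (cumU (d + 1))
     -- E is the region between the two paths
     E = {q : ℝ × ℝ | ∃ bl bu : ℝ,
            (q.1, bl) ∈ lowerPath ∧ (q.1, bu) ∈ upperPath ∧
            bl ≤ q.2 ∧ q.2 ≤ bu}) := by
  classical
  intro S1 S2 E p cumL cumU lowerPath upperPath
  set A : Finset (ℕ × ℕ) := hfin.toFinset with hA
  have hmemA : ∀ x : ℕ × ℕ, x ∈ A ↔ Lam x.1 x.2 ≠ 0 := fun x => by
    simp [hA, Function.uncurry]
  set w1 : ℕ × ℕ → ℝ := fun x => (x.1 : ℝ) * Lam x.1 x.2 with hw1def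
  set w2 : ℕ × ℕ → ℝ := fun x => (x.2 : ℝ) * Lam x.1 x.2 with hw2def
  set C : ℕ → Finset (ℕ × ℕ) :=
    fun d => A.filter (fun x => (x.1 : ℝ) / (x.2 : ℝ) = v d) with hCdef
  have hS1pos : (0:ℝ) < S1 := hS1
  have hS2pos : (0:ℝ) < S2 := hS2
  have hS1sum : S1 = ∑ x ∈ A, w1 x :=
    finsum2_eq_sum Lam hfin (fun l1 l2 => (l1:ℝ) * Lam l1 l2) (fun l1 l2 h => by simp [h])
  have hS2sum : S2 = ∑ x ∈ A, w2 x :=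
    finsum2_eq_sum Lam hfin (fun l1 l2 => (l2:ℝ) * Lam l1 l2) (fun l1 l2 h => by simp [h])
  have hvinj : ∀ d e, d < D → e < D → v d = v e → d = e := by
    intro d e hd he h
    by_contra hne
    rcases Nat.lt_or_ge d e with hlt | hge
    · exact absurd h (ne_of_gt (hvdec d e hlt he))
    · have : e < d := by omega
      exact absurd h.symm (ne_of_gt (hvdec e d this hd))
  have hsingle : ∀ (t : ℕ → ℝ) (r : ℝ) (d0 : ℕ), d0 < D → r = v d0 →
      (∑ d ∈ Finset.range D, if r = v d then t d else 0) = t d0 := by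
    intro t r d0 hd0 hr
    rw [Finset.sum_eq_single_of_mem d0 (Finset.mem_range.mpr hd0)]
    · rw [if_pos hr]
    · intro e he hne
      rw [if_neg]
      intro hc
      exact hne (hvinj e d0 (Finset.mem_range.mp he) hd0 (hc.symm.trans hr))
  have hpart : ∀ f : ℕ × ℕ → ℝ,
      (∑ x ∈ A, f x) = ∑ d ∈ Finset.range D, ∑ x ∈ C d, f x := by
    intro f
    have h1 : ∀ d, (∑ x ∈ C d, f x)
        = ∑ x ∈ A, if (x.1:ℝ)/(x.2:ℝ) = v d then f x else 0 :=
      fun d => Finset.sum_filter _ _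
    rw [Finset.sum_congr rfl (fun d _ => h1 d), Finset.sum_comm]
    apply Finset.sum_congr rfl
    intro x hx
    obtain ⟨-, -, d0, hd0, hr⟩ := hsupp x.1 x.2 ((hmemA x).mp hx)
    exact (hsingle (fun _ => f x) _ d0 hd0 hr).symm
  have hLpos : ∀ x ∈ A, 0 < Lam x.1 x.2 := fun x hx =>
    lt_of_le_of_ne (hnonneg x.1 x.2) (Ne.symm ((hmemA x).mp hx))
  have hx12 : ∀ x ∈ A, (0:ℝ) < x.1 ∧ (0:ℝ) < x.2 := by
    intro x hx
    obtain ⟨h1, h2, -⟩ := hsupp x.1 x.2 ((hmemA x).mp hx)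
    exact ⟨by exact_mod_cast h1, by exact_mod_cast h2⟩
  have hw1posA : ∀ x ∈ A, 0 < w1 x := fun x hx =>
    mul_pos (hx12 x hx).1 (hLpos x hx)
  have hw2posA : ∀ x ∈ A, 0 < w2 x := fun x hx =>
    mul_pos (hx12 x hx).2 (hLpos x hx)
  have hw1nn : ∀ x, 0 ≤ w1 x := fun x => mul_nonneg (Nat.cast_nonneg _) (hnonneg _ _)
  have hw2nn : ∀ x, 0 ≤ w2 x := fun x => mul_nonneg (Nat.cast_nonneg _) (hnonneg _ _)
  set a : ℕ → ℝ := fun d => (∑ x ∈ C d, w1 x) / S1 with hadef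
  set b : ℕ → ℝ := fun d => (∑ x ∈ C d, w2 x) / S2 with hbdef
  have hCmemA : ∀ d, ∀ x ∈ C d, x ∈ A := fun d x hx => (Finset.mem_filter.mp hx).1
  have hCr : ∀ d, ∀ x ∈ C d, (x.1:ℝ)/(x.2:ℝ) = v d := fun d x hx =>
    (Finset.mem_filter.mp hx).2
  have hw1x : ∀ d, ∀ x ∈ C d, w1 x = v d * w2 x := by
    intro d x hx
    have hx2 : (0:ℝ) < x.2 := (hx12 x (hCmemA d x hx)).2
    have h : (x.1:ℝ) = v d * x.2 := by
      rw [← hCr d x hx]; field_simp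
    show (x.1:ℝ) * Lam x.1 x.2 = v d * ((x.2:ℝ) * Lam x.1 x.2)
    rw [h]; ring
  have hw1w2 : ∀ d, (∑ x ∈ C d, w1 x) = v d * ∑ x ∈ C d, w2 x := by
    intro d
    rw [Finset.mul_sum]
    exact Finset.sum_congr rfl (hw1x d)
  have hp : ∀ d, p d = (a d, b d) := by
    intro d
    have h1 : (∑ᶠ (l1:ℕ), ∑ᶠ (l2:ℕ),
        (if (l1:ℝ)/(l2:ℝ) = v d then (l1:ℝ) * Lam l1 l2 else 0)) = ∑ x ∈ C d, w1 x := by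
      rw [finsum2_eq_sum Lam hfin _ (fun l1 l2 h => by simp [h])]
      exact (Finset.sum_filter _ _).symm
    have h2 : (∑ᶠ (l1:ℕ), ∑ᶠ (l2:ℕ),
        (if (l1:ℝ)/(l2:ℝ) = v d then (l2:ℝ) * Lam l1 l2 else 0)) = ∑ x ∈ C d, w2 x := by
      rw [finsum2_eq_sum Lam hfin _ (fun l1 l2 h => by simp [h])]
      exact (Finset.sum_filter _ _).symm
    show ((_ : ℝ) / S1, (_ : ℝ) / S2) = (a d, b d)
    rw [h1, h2]
  have hsum_a : (∑ e ∈ Finset.range D, a e) = 1 := by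
    have h : (∑ e ∈ Finset.range D, a e)
        = (∑ e ∈ Finset.range D, ∑ x ∈ C e, w1 x)/S1 := (Finset.sum_div _ _ _).symm
    rw [h, ← hpart w1, ← hS1sum, div_self hS1pos.ne']
  have hsum_b : (∑ e ∈ Finset.range D, b e) = 1 := by
    have h : (∑ e ∈ Finset.range D, b e)
        = (∑ e ∈ Finset.range D, ∑ x ∈ C e, w2 x)/S2 := (Finset.sum_div _ _ _).symm
    rw [h, ← hpart w2, ← hS2sum, div_self hS2pos.ne']
  have hCne : ∀ d < D, ∃ x, x ∈ C d := by
    intro d hd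
    obtain ⟨l1, l2, hne, hr⟩ := hattained d hd
    exact ⟨(l1, l2), Finset.mem_filter.mpr ⟨(hmemA (l1,l2)).mpr hne, hr⟩⟩
  have hsw1pos : ∀ d < D, 0 < ∑ x ∈ C d, w1 x := by
    intro d hd
    obtain ⟨x, hx⟩ := hCne d hd
    exact Finset.sum_pos' (fun y hy => (hw1nn y)) ⟨x, hx, hw1posA x (hCmemA d x hx)⟩
  have hsw2pos : ∀ d < D, 0 < ∑ x ∈ C d, w2 x := by
    intro d hd
    obtain ⟨x, hx⟩ := hCne d hd
    exact Finset.sum_pos' (fun y hy => (hw2nn y)) ⟨x, hx, hw2posA x (hCmemA d x hx)⟩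
  have ha_pos : ∀ d < D, 0 < a d := fun d hd => div_pos (hsw1pos d hd) hS1pos
  have hb_pos : ∀ d < D, 0 < b d := fun d hd => div_pos (hsw2pos d hd) hS2pos
  have haS1 : ∀ d, a d * S1 = ∑ x ∈ C d, w1 x := fun d => div_mul_cancel₀ _ hS1pos.ne'
  have hbS2 : ∀ d, b d * S2 = ∑ x ∈ C d, w2 x := fun d => div_mul_cancel₀ _ hS2pos.ne'
  have haV : ∀ d, a d * S1 = v d * (b d * S2) := by
    intro d
    rw [haS1 d, hbS2 d, hw1w2 d]
  have hslope : ∀ d e, d < e → e < D → b d * a e < b e * a d := by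
    intro d e hde heD
    have hdD : d < D := hde.trans heD
    have h4 : b d * a e * S1 < b e * a d * S1 := by
      rw [mul_assoc, mul_assoc, haV e, haV d]
      nlinarith [mul_pos (mul_pos (hb_pos d hdD) (hb_pos e heD)) hS2pos,
        hvdec d e hde heD]
    exact lt_of_mul_lt_mul_right h4 hS1pos.le
  -- zonotope description of E
  have hqE : ∀ q : ℝ × ℝ, q ∈ E ↔ ∃ t : ℕ → ℝ, (∀ e, t e ∈ Set.Icc (0:ℝ) 1) ∧
      q = (∑ e ∈ Finset.range D, t e * a e, ∑ e ∈ Finset.range D, t e * b e) := by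
    intro q
    constructor
    · intro hq
      obtain ⟨σ, hσ, hqeq⟩ := hq
      set t : ℕ → ℝ := fun d => if h : 0 < ∑ x ∈ C d, w2 x then
        (∑ x ∈ C d, w2 x * σ x.1 x.2) / (∑ x ∈ C d, w2 x) else 0 with htdef
      have htIcc : ∀ e, t e ∈ Set.Icc (0:ℝ) 1 := by
        intro e
        show (if h : 0 < ∑ x ∈ C e, w2 x then
          (∑ x ∈ C e, w2 x * σ x.1 x.2) / (∑ x ∈ C e, w2 x) else 0) ∈ Set.Icc (0:ℝ) 1
        by_cases h : 0 < ∑ x ∈ C e, w2 x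
        · rw [dif_pos h]
          constructor
          · exact div_nonneg (Finset.sum_nonneg fun x hx =>
              mul_nonneg (hw2nn x) (hσ x.1 x.2).1) h.le
          · rw [div_le_one h]
            apply Finset.sum_le_sum
            intro x hx
            nlinarith [(hσ x.1 x.2).1, (hσ x.1 x.2).2, hw2nn x]
        · rw [dif_neg h]
          exact ⟨le_refl 0, zero_le_one⟩
      have ht2 : ∀ d < D, (∑ x ∈ C d, w2 x * σ x.1 x.2) = t d * ∑ x ∈ C d, w2 x := by
        intro d hd
        have h := hsw2pos d hd
        show _ = (if h : 0 < ∑ x ∈ C d, w2 x then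
          (∑ x ∈ C d, w2 x * σ x.1 x.2) / (∑ x ∈ C d, w2 x) else 0) * _
        rw [dif_pos h, div_mul_cancel₀ _ h.ne']
      have ht1 : ∀ d < D, (∑ x ∈ C d, w1 x * σ x.1 x.2) = t d * ∑ x ∈ C d, w1 x := by
        intro d hd
        have e1 : ∀ x ∈ C d, w1 x * σ x.1 x.2 = v d * (w2 x * σ x.1 x.2) := by
          intro x hx
          rw [hw1x d x hx]; ring
        rw [Finset.sum_congr rfl e1, ← Finset.mul_sum, ht2 d hd, hw1w2 d]; ring
      refine ⟨t, htIcc, ?_⟩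
      rw [hqeq]
      have hnum1 : (∑ᶠ (l1:ℕ), ∑ᶠ (l2:ℕ), (l1:ℝ) * Lam l1 l2 * σ l1 l2)
          = ∑ x ∈ A, w1 x * σ x.1 x.2 :=
        finsum2_eq_sum Lam hfin _ (fun l1 l2 h => by simp [h])
      have hnum2 : (∑ᶠ (l1:ℕ), ∑ᶠ (l2:ℕ), (l2:ℝ) * Lam l1 l2 * σ l1 l2)
          = ∑ x ∈ A, w2 x * σ x.1 x.2 :=
        finsum2_eq_sum Lam hfin _ (fun l1 l2 h => by simp [h])
      have c1 : (∑ᶠ (l1:ℕ), ∑ᶠ (l2:ℕ), (l1:ℝ) * Lam l1 l2 * σ l1 l2) / S1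
          = ∑ e ∈ Finset.range D, t e * a e := by
        rw [hnum1, hpart (fun x => w1 x * σ x.1 x.2), Finset.sum_div]
        apply Finset.sum_congr rfl
        intro d hd
        rw [ht1 d (Finset.mem_range.mp hd), mul_div_assoc]
      have c2 : (∑ᶠ (l1:ℕ), ∑ᶠ (l2:ℕ), (l2:ℝ) * Lam l1 l2 * σ l1 l2) / S2
          = ∑ e ∈ Finset.range D, t e * b e := by
        rw [hnum2, hpart (fun x => w2 x * σ x.1 x.2), Finset.sum_div]
        apply Finset.sum_congr rfl
        intro d hd
        rw [ht2 d (Finset.mem_range.mp hd), mul_div_assoc]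
      rw [Prod.mk.injEq]
      exact ⟨c1, c2⟩
    · rintro ⟨t, ht, rfl⟩
      set σ : ℕ → ℕ → ℝ := fun l1 l2 =>
        ∑ d ∈ Finset.range D, if (l1:ℝ)/(l2:ℝ) = v d then t d else 0 with hσdef
      have hσIcc : ∀ l1 l2, σ l1 l2 ∈ Set.Icc (0:ℝ) 1 := by
        intro l1 l2
        show (∑ d ∈ Finset.range D, if (l1:ℝ)/(l2:ℝ) = v d then t d else 0)
          ∈ Set.Icc (0:ℝ) 1
        by_cases hex : ∃ d, d < D ∧ (l1:ℝ)/(l2:ℝ) = v d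
        · obtain ⟨d0, hd0, hr⟩ := hex
          rw [hsingle t _ d0 hd0 hr]
          exact ht d0
        · rw [Finset.sum_eq_zero (fun e he => if_neg
            (fun hc => hex ⟨e, Finset.mem_range.mp he, hc⟩))]
          exact ⟨le_refl 0, zero_le_one⟩
      have hσC : ∀ d < D, ∀ x ∈ C d, σ x.1 x.2 = t d := by
        intro d hd x hx
        exact hsingle t _ d hd (hCr d x hx)
      refine ⟨σ, hσIcc, ?_⟩
      have hnum1 : (∑ᶠ (l1:ℕ), ∑ᶠ (l2:ℕ), (l1:ℝ) * Lam l1 l2 * σ l1 l2)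
          = ∑ x ∈ A, w1 x * σ x.1 x.2 :=
        finsum2_eq_sum Lam hfin _ (fun l1 l2 h => by simp [h])
      have hnum2 : (∑ᶠ (l1:ℕ), ∑ᶠ (l2:ℕ), (l2:ℝ) * Lam l1 l2 * σ l1 l2)
          = ∑ x ∈ A, w2 x * σ x.1 x.2 :=
        finsum2_eq_sum Lam hfin _ (fun l1 l2 h => by simp [h])
      have c1 : (∑ᶠ (l1:ℕ), ∑ᶠ (l2:ℕ), (l1:ℝ) * Lam l1 l2 * σ l1 l2) / S1
          = ∑ e ∈ Finset.range D, t e * a e := by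
        rw [hnum1, hpart (fun x => w1 x * σ x.1 x.2), Finset.sum_div]
        apply Finset.sum_congr rfl
        intro d hd
        have hd' := Finset.mem_range.mp hd
        rw [Finset.sum_congr rfl (fun x hx => by rw [hσC d hd' x hx]),
          ← Finset.sum_mul, mul_comm, mul_div_assoc]
      have c2 : (∑ᶠ (l1:ℕ), ∑ᶠ (l2:ℕ), (l2:ℝ) * Lam l1 l2 * σ l1 l2) / S2
          = ∑ e ∈ Finset.range D, t e * b e := by
        rw [hnum2, hpart (fun x => w2 x * σ x.1 x.2), Finset.sum_div]
        apply Finset.sum_congr rfl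
        intro d hd
        have hd' := Finset.mem_range.mp hd
        rw [Finset.sum_congr rfl (fun x hx => by rw [hσC d hd' x hx]),
          ← Finset.sum_mul, mul_comm, mul_div_assoc]
      rw [Prod.mk.injEq]
      exact ⟨c1.symm, c2.symm⟩
  -- cumulative sums and reversed data
  set Ac : ℕ → ℝ := fun m => ∑ e ∈ Finset.range m, a e with hAcdef
  set Bc : ℕ → ℝ := fun m => ∑ e ∈ Finset.range m, b e with hBcdef
  set a2 : ℕ → ℝ := fun e => a (D - 1 - e) with ha2def
  set b2 : ℕ → ℝ := fun e => b (D - 1 - e) with hb2def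
  set Ac2 : ℕ → ℝ := fun m => ∑ e ∈ Finset.range m, a2 e with hAc2def
  set Bc2 : ℕ → ℝ := fun m => ∑ e ∈ Finset.range m, b2 e with hBc2def
  have hcumL : ∀ m, cumL m = (Ac m, Bc m) := by
    intro m
    show (∑ d ∈ Finset.range m, p d) = ((Ac m, Bc m) : ℝ × ℝ)
    rw [Finset.sum_congr rfl (fun d _ => hp d)]
    apply Prod.ext
    · rw [Prod.fst_sum]
    · rw [Prod.snd_sum]
  have hcumU : ∀ m, cumU m = (Ac2 m, Bc2 m) := by
    intro m
    show (∑ d ∈ Finset.range m, p (D - 1 - d)) = ((Ac2 m, Bc2 m) : ℝ × ℝ)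
    rw [Finset.sum_congr rfl (fun d _ => hp (D - 1 - d))]
    apply Prod.ext
    · rw [Prod.fst_sum]
    · rw [Prod.snd_sum]
  have ha2pos : ∀ e < D, 0 < a2 e := fun e he => ha_pos _ (by omega)
  have hb2pos : ∀ e < D, 0 < b2 e := fun e he => hb_pos _ (by omega)
  have hslope2 : ∀ e f, e < f → f < D → b2 f * a2 e < b2 e * a2 f := by
    intro e f hef hf
    exact hslope (D - 1 - f) (D - 1 - e) (by omega) (by omega)
  have hsum_a2 : (∑ e ∈ Finset.range D, a2 e) = 1 :=
    (Finset.sum_range_reflect a D).trans hsum_a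
  have hAc0 : Ac 0 = 0 := Finset.sum_range_zero a
  have hAcD : Ac D = 1 := hsum_a
  have hAc20 : Ac2 0 = 0 := Finset.sum_range_zero a2
  have hAc2D : Ac2 D = 1 := hsum_a2
  ext q
  obtain ⟨X, Y⟩ := q
  simp only [Set.mem_setOf_eq]
  rw [hqE (X, Y)]
  constructor
  · rintro ⟨t, ht, hXY⟩
    rw [Prod.mk.injEq] at hXY
    obtain ⟨hXeq, hYeq⟩ := hXY
    have hX0 : 0 ≤ X := by
      rw [hXeq]
      exact Finset.sum_nonneg fun e he =>
        mul_nonneg (ht e).1 (ha_pos e (Finset.mem_range.mp he)).le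
    have hX1 : X ≤ 1 := by
      rw [hXeq, ← hsum_a]
      apply Finset.sum_le_sum
      intro e he
      nlinarith [(ht e).2, (ht e).1, ha_pos e (Finset.mem_range.mp he)]
    obtain ⟨d, hdD, hXl, hXr⟩ := exists_seg Ac X D hD
      (by rw [hAc0]; exact hX0) (by rw [hAcD]; exact hX1)
    obtain ⟨d2, hd2D, hXl2, hXr2⟩ := exists_seg Ac2 X D hD
      (by rw [hAc20]; exact hX0) (by rw [hAc2D]; exact hX1)
    have hseg := point_on_segment (Ac d) (Bc d) (a d) (b d) X (ha_pos d hdD) hXl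
      (by have h := Finset.sum_range_succ a d
          have h' : Ac (d+1) = Ac d + a d := h
          linarith)
    have hseg2 := point_on_segment (Ac2 d2) (Bc2 d2) (a2 d2) (b2 d2) X
      (ha2pos d2 hd2D) hXl2
      (by have h' : Ac2 (d2+1) = Ac2 d2 + a2 d2 := Finset.sum_range_succ a2 d2
          linarith)
    set t2 : ℕ → ℝ := fun e => t (D - 1 - e) with ht2def
    have hXa2 : (∑ e ∈ Finset.range D, t2 e * a2 e) = X :=
      (Finset.sum_range_reflect (fun e => t e * a e) D).trans hXeq.symm
    have hYb2 : (∑ e ∈ Finset.range D, t2 e * b2 e) = Y :=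
      (Finset.sum_range_reflect (fun e => t e * b e) D).trans hYeq.symm
    refine ⟨Bc d + b d / a d * (X - Ac d), Bc2 d2 + b2 d2 / a2 d2 * (X - Ac2 d2),
      ?_, ?_, ?_, ?_⟩
    · show (X, Bc d + b d / a d * (X - Ac d)) ∈
        ⋃ e ∈ Finset.range D, segment ℝ (cumL e) (cumL (e + 1))
      simp only [Set.mem_iUnion]
      refine ⟨d, Finset.mem_range.mpr hdD, ?_⟩
      rw [hcumL d, hcumL (d+1),
        show Ac (d+1) = Ac d + a d from Finset.sum_range_succ a d,
        show Bc (d+1) = Bc d + b d from Finset.sum_range_succ b d]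
      exact hseg
    · show (X, Bc2 d2 + b2 d2 / a2 d2 * (X - Ac2 d2)) ∈
        ⋃ e ∈ Finset.range D, segment ℝ (cumU e) (cumU (e + 1))
      simp only [Set.mem_iUnion]
      refine ⟨d2, Finset.mem_range.mpr hd2D, ?_⟩
      rw [hcumU d2, hcumU (d2+1),
        show Ac2 (d2+1) = Ac2 d2 + a2 d2 from Finset.sum_range_succ a2 d2,
        show Bc2 (d2+1) = Bc2 d2 + b2 d2 from Finset.sum_range_succ b2 d2]
      exact hseg2
    · show Bc d + b d / a d * (X - Ac d) ≤ Y
      have h := support_line_lower D d hdD a b t ha_pos hslope ht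
      rw [← hXeq] at h
      rw [hYeq]
      exact h
    · show Y ≤ Bc2 d2 + b2 d2 / a2 d2 * (X - Ac2 d2)
      have h := support_line_upper D d2 hd2D a2 b2 t2 ha2pos hslope2 (fun e => ht _)
      rw [hXa2, hYb2] at h
      exact h
  · rintro ⟨bl, bu, hl, hu, hblY, hYbu⟩
    have hl' : ((X : ℝ), bl) ∈
        ⋃ e ∈ Finset.range D, segment ℝ (cumL e) (cumL (e + 1)) := hl
    have hu' : ((X : ℝ), bu) ∈
        ⋃ e ∈ Finset.range D, segment ℝ (cumU e) (cumU (e + 1)) := hu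
    obtain ⟨d, hd, hsegl⟩ := Set.mem_iUnion₂.mp hl'
    obtain ⟨d2, hd2, hsegu⟩ := Set.mem_iUnion₂.mp hu'
    have hdD := Finset.mem_range.mp hd
    have hd2D := Finset.mem_range.mp hd2
    rw [segment_eq_image'] at hsegl hsegu
    obtain ⟨θ, hθ, heql⟩ := hsegl
    obtain ⟨θ2, hθ2, hequ⟩ := hsegu
    have heql' : ((Ac d, Bc d) : ℝ × ℝ)
        + θ • (((Ac d + a d, Bc d + b d) : ℝ × ℝ) - (Ac d, Bc d)) = (X, bl) := by
      rw [show ((Ac d + a d, Bc d + b d) : ℝ × ℝ) = (Ac (d+1), Bc (d+1)) from by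
            rw [show Ac (d+1) = Ac d + a d from Finset.sum_range_succ a d,
              show Bc (d+1) = Bc d + b d from Finset.sum_range_succ b d],
        ← hcumL d, ← hcumL (d+1)]
      exact heql
    have hequ' : ((Ac2 d2, Bc2 d2) : ℝ × ℝ)
        + θ2 • (((Ac2 d2 + a2 d2, Bc2 d2 + b2 d2) : ℝ × ℝ) - (Ac2 d2, Bc2 d2)) = (X, bu) := by
      rw [show ((Ac2 d2 + a2 d2, Bc2 d2 + b2 d2) : ℝ × ℝ) = (Ac2 (d2+1), Bc2 (d2+1)) from by
            rw [show Ac2 (d2+1) = Ac2 d2 + a2 d2 from Finset.sum_range_succ a2 d2,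
              show Bc2 (d2+1) = Bc2 d2 + b2 d2 from Finset.sum_range_succ b2 d2],
        ← hcumU d2, ← hcumU (d2+1)]
      exact hequ
    simp only [Prod.mk_sub_mk, Prod.smul_mk, Prod.mk_add_mk, smul_eq_mul,
      Prod.mk.injEq] at heql' hequ'
    obtain ⟨hXl, hbl⟩ := heql'
    obtain ⟨hXu, hbu⟩ := hequ'
    have hXl' : Ac d + θ * a d = X := by rw [← hXl]; ring
    have hbl' : Bc d + θ * b d = bl := by rw [← hbl]; ring
    have hXu' : Ac2 d2 + θ2 * a2 d2 = X := by rw [← hXu]; ring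
    have hbu' : Bc2 d2 + θ2 * b2 d2 = bu := by rw [← hbu]; ring
    set tl : ℕ → ℝ := fun e => if e < d then (1:ℝ) else if e = d then θ else 0
      with htldef
    set tt2 : ℕ → ℝ := fun e => if e < d2 then (1:ℝ) else if e = d2 then θ2 else 0
      with htt2def
    set tu : ℕ → ℝ := fun e => tt2 (D - 1 - e) with htudef
    have htlIcc : ∀ e, tl e ∈ Set.Icc (0:ℝ) 1 := by
      intro e
      show (if e < d then (1:ℝ) else if e = d then θ else 0) ∈ Set.Icc (0:ℝ) 1
      by_cases h1 : e < d
      · rw [if_pos h1]; exact ⟨zero_le_one, le_refl 1⟩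
      · rw [if_neg h1]
        by_cases h2 : e = d
        · rw [if_pos h2]; exact hθ
        · rw [if_neg h2]; exact ⟨le_refl 0, zero_le_one⟩
    have htt2Icc : ∀ e, tt2 e ∈ Set.Icc (0:ℝ) 1 := by
      intro e
      show (if e < d2 then (1:ℝ) else if e = d2 then θ2 else 0) ∈ Set.Icc (0:ℝ) 1
      by_cases h1 : e < d2
      · rw [if_pos h1]; exact ⟨zero_le_one, le_refl 1⟩
      · rw [if_neg h1]
        by_cases h2 : e = d2
        · rw [if_pos h2]; exact hθ2
        · rw [if_neg h2]; exact ⟨le_refl 0, zero_le_one⟩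
    have htuIcc : ∀ e, tu e ∈ Set.Icc (0:ℝ) 1 := fun e => htt2Icc _
    have hsla : (∑ e ∈ Finset.range D, tl e * a e) = X :=
      (sum_tl D d hdD θ a).trans hXl'
    have hslb : (∑ e ∈ Finset.range D, tl e * b e) = bl :=
      (sum_tl D d hdD θ b).trans hbl'
    have hreflcong : ∀ c2 : ℕ → ℝ, (∑ e ∈ Finset.range D, tu e * c2 (D - 1 - e))
        = ∑ e ∈ Finset.range D, tt2 e * c2 e := by
      intro c2
      exact Finset.sum_range_reflect (fun e => tt2 e * c2 e) D
    have hsua : (∑ e ∈ Finset.range D, tu e * a e) = X := by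
      have hcong : (∑ e ∈ Finset.range D, tu e * a e)
          = ∑ e ∈ Finset.range D, tu e * a2 (D - 1 - e) := by
        apply Finset.sum_congr rfl
        intro e he
        have heD := Finset.mem_range.mp he
        show tu e * a e = tu e * a (D - 1 - (D - 1 - e))
        rw [show D - 1 - (D - 1 - e) = e from by omega]
      rw [hcong, hreflcong a2, sum_tl D d2 hd2D θ2 a2]
      exact hXu'
    have hsub : (∑ e ∈ Finset.range D, tu e * b e) = bu := by
      have hcong : (∑ e ∈ Finset.range D, tu e * b e)
          = ∑ e ∈ Finset.range D, tu e * b2 (D - 1 - e) := by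
        apply Finset.sum_congr rfl
        intro e he
        have heD := Finset.mem_range.mp he
        show tu e * b e = tu e * b (D - 1 - (D - 1 - e))
        rw [show D - 1 - (D - 1 - e) = e from by omega]
      rw [hcong, hreflcong b2, sum_tl D d2 hd2D θ2 b2]
      exact hbu'
    by_cases hc : bl < bu
    · have hpos : (0:ℝ) < bu - bl := by linarith
      set lam : ℝ := (bu - Y) / (bu - bl) with hlamdef
      have hlam0 : 0 ≤ lam := div_nonneg (by linarith) hpos.le
      have hlam1 : lam ≤ 1 := by
        rw [hlamdef, div_le_one hpos]; linarith
      have hcomb : ∀ c2 : ℕ → ℝ,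
          (∑ e ∈ Finset.range D, (lam * tl e + (1 - lam) * tu e) * c2 e)
          = lam * (∑ e ∈ Finset.range D, tl e * c2 e)
            + (1 - lam) * ∑ e ∈ Finset.range D, tu e * c2 e := by
        intro c2
        rw [Finset.mul_sum, Finset.mul_sum, ← Finset.sum_add_distrib]
        exact Finset.sum_congr rfl (fun e _ => by ring)
      refine ⟨fun e => lam * tl e + (1 - lam) * tu e,
        fun e => comb_mem lam (tl e) (tu e) hlam0 hlam1 (htlIcc e) (htuIcc e), ?_⟩
      rw [Prod.mk.injEq]
      constructor
      · rw [hcomb a, hsla, hsua]; ring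
      · rw [hcomb b, hslb, hsub]
        have h5 : lam * (bu - bl) = bu - Y := div_mul_cancel₀ _ hpos.ne'
        linear_combination h5
    · push_neg at hc
      have hYbl : Y = bl := le_antisymm (by linarith) hblY
      refine ⟨tl, htlIcc, ?_⟩
      rw [Prod.mk.injEq]
      exact ⟨hsla.symm, by rw [hYbl]; exact hslb.symm⟩
end

section
/- Let l1, l2 be positive integers, Γ^{(1)}, Γ^{(2)} check node degree distributions supported on even degrees ≥ 2, with Γ^{(j)}(1) = 1. Define θ(e) = (1 − l1 − l2) h(e) + (l1/Γ^{(1)'}(1)) Σ_r Γ^{(1)}_r log q_r(v_1(e)) + (l2/Γ^{(2)'}(1)) Σ_r Γ^{(2)}_r log q_r(v_2(e)) − e l1 log v_1(e) − e l2 log v_2(e) − R_des, where h is the binary entropy function, q_r(v) = ((1+v)^r + (1−v)^r)/2, and v_j(e) is the unique positive solution of the saddle point equation (v/Γ^{(j)'}(1)) Σ_r r Γ^{(j)}_r ((1+v)^{r−1} − (1−v)^{r−1})/((1+v)^r + (1−v)^r) = e. Then θ(1−e) = θ(e) for all e ∈ (0,1). -/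
/-! For even `r` the inversion `v ↦ v⁻¹` satisfies `q_r(v⁻¹) = q_r(v) / v ^ r`, and the summand
`ρ_r(v)` of the saddle point equation satisfies `ρ_r(v⁻¹) = v - v ^ 2 ρ_r(v)`; averaging the latter
against `r Γ_r / Γ'(1)` shows that inversion turns a solution of the saddle point equation for `e`
into one for `1 - e`, so by uniqueness `v_j(1 - e) = v_j(e)⁻¹`. Substituting, each `log q` sum drops
by `Γ'(1) log v_j`, and `-l_j log v_j - (1 - e) l_j log v_j⁻¹ = -e l_j log v_j`; the entropy term
is symmetric. -/

open Function Real

lemma finsum_mul_eq_add_of_ne_zero {α : Type*} {w f g k : α → ℝ} (hw : (support w).Finite)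
    (a b : ℝ) (h : ∀ x, w x ≠ 0 → f x = a * g x + b * k x) :
    ∑ᶠ x, w x * f x = a * ∑ᶠ x, w x * g x + b * ∑ᶠ x, w x * k x := by
  have hw' : HasFiniteSupport w := hw
  rw [mul_finsum, mul_finsum, ← finsum_add_distrib (by fun_prop) (by fun_prop)]
  refine finsum_congr fun x => ?_
  by_cases hx : w x = 0
  · simp [hx]
  · rw [h x hx]; ring

lemma one_add_inv_pow_add_one_sub_inv_pow {v : ℝ} (hv : v ≠ 0) {n : ℕ} (hn : Even n) :
    (1 + v⁻¹) ^ n + (1 - v⁻¹) ^ n = ((1 + v) ^ n + (1 - v) ^ n) / v ^ n := by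
  rw [show 1 + v⁻¹ = (1 + v) / v by field_simp; ring,
    show 1 - v⁻¹ = -((1 - v) / v) by field_simp; ring,
    hn.neg_pow, div_pow, div_pow, add_div]

lemma one_add_inv_pow_sub_one_sub_inv_pow {v : ℝ} (hv : v ≠ 0) {n : ℕ} (hn : Odd n) :
    (1 + v⁻¹) ^ n - (1 - v⁻¹) ^ n = ((1 + v) ^ n + (1 - v) ^ n) / v ^ n := by
  rw [show 1 + v⁻¹ = (1 + v) / v by field_simp; ring,
    show 1 - v⁻¹ = -((1 - v) / v) by field_simp; ring,
    hn.neg_pow, div_pow, div_pow, sub_neg_eq_add, add_div]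

lemma one_add_pow_add_one_sub_pow_pos (v : ℝ) {n : ℕ} (hn : Even n) :
    0 < (1 + v) ^ n + (1 - v) ^ n := by
  rcases le_or_gt 0 v with hv | hv
  · exact add_pos_of_pos_of_nonneg (pow_pos (by linarith) n) (hn.pow_nonneg _)
  · exact add_pos_of_nonneg_of_pos (hn.pow_nonneg _) (pow_pos (by linarith) n)

noncomputable def saddleRatio (r : ℕ) (v : ℝ) : ℝ :=
  ((1 + v) ^ (r - 1) - (1 - v) ^ (r - 1)) / ((1 + v) ^ r + (1 - v) ^ r)

lemma saddleRatio_inv {v : ℝ} (hv : v ≠ 0) {r : ℕ} (hr : Even r) (hr0 : r ≠ 0) :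
    saddleRatio r v⁻¹ = v - v ^ 2 * saddleRatio r v := by
  obtain ⟨k, rfl⟩ : ∃ k, r = k + 1 := ⟨r - 1, by omega⟩
  have hk : Odd k := by simpa [Nat.even_add_one] using hr
  have hpos := one_add_pow_add_one_sub_pow_pos v hr
  rw [saddleRatio, saddleRatio, Nat.add_sub_cancel, one_add_inv_pow_sub_one_sub_inv_pow hv hk,
    one_add_inv_pow_add_one_sub_inv_pow hv hr]
  field_simp
  ring

noncomputable def saddlePointMap (Γ : ℕ → ℝ) (v : ℝ) : ℝ :=
  (v / ∑ᶠ r : ℕ, (r : ℝ) * Γ r) * ∑ᶠ r : ℕ, (r : ℝ) * Γ r * saddleRatio r v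

lemma saddlePointMap_inv {Γ : ℕ → ℝ} (hfin : (support Γ).Finite) (heven : ∀ r, Γ r ≠ 0 → Even r)
    (hG : ∑ᶠ r : ℕ, (r : ℝ) * Γ r ≠ 0) {v : ℝ} (hv : v ≠ 0) :
    saddlePointMap Γ v⁻¹ = 1 - saddlePointMap Γ v := by
  have hw : (support fun r : ℕ => (r : ℝ) * Γ r).Finite :=
    hfin.subset (support_mul_subset_right _ _)
  have hsum := finsum_mul_eq_add_of_ne_zero hw v (-v ^ 2) (f := fun r => saddleRatio r v⁻¹)
    (g := fun _ => 1) (k := fun r => saddleRatio r v) fun r hr => by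
      obtain ⟨hr0, hΓ⟩ := mul_ne_zero_iff.mp hr
      rw [saddleRatio_inv hv (heven r hΓ) (by exact_mod_cast hr0)]
      ring
  simp only [mul_one] at hsum
  rw [saddlePointMap, saddlePointMap, hsum]
  field_simp
  ring

lemma log_one_add_inv_pow_add_one_sub_inv_pow {v : ℝ} (hv : v ≠ 0) {n : ℕ} (hn : Even n) :
    log (((1 + v⁻¹) ^ n + (1 - v⁻¹) ^ n) / 2)
      = log (((1 + v) ^ n + (1 - v) ^ n) / 2) - n * log v := by
  have hpos := one_add_pow_add_one_sub_pow_pos v hn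
  rw [one_add_inv_pow_add_one_sub_inv_pow hv hn, div_right_comm,
    log_div (by positivity) (pow_ne_zero n hv), log_pow]

lemma finsum_mul_log_one_add_inv_pow {Γ : ℕ → ℝ} (hfin : (support Γ).Finite)
    (heven : ∀ r, Γ r ≠ 0 → Even r) {v : ℝ} (hv : v ≠ 0) :
    ∑ᶠ r : ℕ, Γ r * log (((1 + v⁻¹) ^ r + (1 - v⁻¹) ^ r) / 2)
      = ∑ᶠ r : ℕ, Γ r * log (((1 + v) ^ r + (1 - v) ^ r) / 2)
        - (∑ᶠ r : ℕ, (r : ℝ) * Γ r) * log v := by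
  rw [finsum_mul_eq_add_of_ne_zero hfin 1 (-log v) (k := fun r : ℕ => (r : ℝ)) fun r hr => by
      rw [log_one_add_inv_pow_add_one_sub_inv_pow hv (heven r hr)]; ring,
    finsum_congr fun r => mul_comm (Γ r) r]
  ring

lemma saddleSolution_one_sub {Γ : ℕ → ℝ} (hfin : (support Γ).Finite)
    (heven : ∀ r, Γ r ≠ 0 → Even r) (hG : ∑ᶠ r : ℕ, (r : ℝ) * Γ r ≠ 0) {V : ℝ → ℝ}
    (hV : ∀ e ∈ Set.Ioo (0 : ℝ) 1, 0 < V e ∧ saddlePointMap Γ (V e) = e ∧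
      ∀ w, 0 < w → saddlePointMap Γ w = e → w = V e)
    {e : ℝ} (he : e ∈ Set.Ioo (0 : ℝ) 1) :
    V (1 - e) = (V e)⁻¹ := by
  obtain ⟨hpos, hsol, -⟩ := hV e he
  have he' : 1 - e ∈ Set.Ioo (0 : ℝ) 1 := ⟨by linarith [he.2], by linarith [he.1]⟩
  refine ((hV (1 - e) he').2.2 _ (inv_pos.2 hpos) ?_).symm
  rw [saddlePointMap_inv hfin heven hG hpos.ne', hsol]

theorem theta_symmetry_even_checks_general
    (l1 l2 : ℕ)
    (Γ1 Γ2 : ℕ → ℝ) (Rdes : ℝ)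
    (h1fin : (Function.support Γ1).Finite) (h2fin : (Function.support Γ2).Finite)
    (h1deg : ∀ r, Γ1 r ≠ 0 → 2 ≤ r ∧ Even r)
    (h2deg : ∀ r, Γ2 r ≠ 0 → 2 ≤ r ∧ Even r)
    (h1Γ' : 0 < ∑ᶠ (r : ℕ), (r : ℝ) * Γ1 r)
    (h2Γ' : 0 < ∑ᶠ (r : ℕ), (r : ℝ) * Γ2 r)
    (V1 V2 : ℝ → ℝ)
    -- V j is the unique positive solution of the saddle point equation for Γ j
    (hV1 : ∀ e ∈ Set.Ioo (0 : ℝ) 1,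
      0 < V1 e ∧
      (V1 e / ∑ᶠ (r : ℕ), (r : ℝ) * Γ1 r) *
        (∑ᶠ (r : ℕ), (r : ℝ) * Γ1 r *
          (((1 + V1 e) ^ (r - 1) - (1 - V1 e) ^ (r - 1)) /
            ((1 + V1 e) ^ r + (1 - V1 e) ^ r))) = e ∧
      ∀ w, 0 < w →
        (w / ∑ᶠ (r : ℕ), (r : ℝ) * Γ1 r) *
          (∑ᶠ (r : ℕ), (r : ℝ) * Γ1 r *
            (((1 + w) ^ (r - 1) - (1 - w) ^ (r - 1)) / ((1 + w) ^ r + (1 - w) ^ r))) = e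
        → w = V1 e)
    (hV2 : ∀ e ∈ Set.Ioo (0 : ℝ) 1,
      0 < V2 e ∧
      (V2 e / ∑ᶠ (r : ℕ), (r : ℝ) * Γ2 r) *
        (∑ᶠ (r : ℕ), (r : ℝ) * Γ2 r *
          (((1 + V2 e) ^ (r - 1) - (1 - V2 e) ^ (r - 1)) /
            ((1 + V2 e) ^ r + (1 - V2 e) ^ r))) = e ∧
      ∀ w, 0 < w →
        (w / ∑ᶠ (r : ℕ), (r : ℝ) * Γ2 r) *
          (∑ᶠ (r : ℕ), (r : ℝ) * Γ2 r *
            (((1 + w) ^ (r - 1) - (1 - w) ^ (r - 1)) / ((1 + w) ^ r + (1 - w) ^ r))) = e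
        → w = V2 e) :
    (let h : ℝ → ℝ := fun e => -(e * Real.log e) - (1 - e) * Real.log (1 - e)
     let q : ℕ → ℝ → ℝ := fun r w => ((1 + w) ^ r + (1 - w) ^ r) / 2
     let θ : ℝ → ℝ := fun e =>
       (1 - (l1 : ℝ) - (l2 : ℝ)) * h e
       + ((l1 : ℝ) / ∑ᶠ (r : ℕ), (r : ℝ) * Γ1 r) *
           (∑ᶠ (r : ℕ), Γ1 r * Real.log (q r (V1 e)))
       + ((l2 : ℝ) / ∑ᶠ (r : ℕ), (r : ℝ) * Γ2 r) *
           (∑ᶠ (r : ℕ), Γ2 r * Real.log (q r (V2 e)))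
       - e * (l1 : ℝ) * Real.log (V1 e) - e * (l2 : ℝ) * Real.log (V2 e) - Rdes
     ∀ e ∈ Set.Ioo (0 : ℝ) 1, θ (1 - e) = θ e) := by
  intro h q θ e he
  have heven1 r (hr : Γ1 r ≠ 0) : Even r := (h1deg r hr).2
  have heven2 r (hr : Γ2 r ≠ 0) : Even r := (h2deg r hr).2
  have hpos1 := (hV1 e he).1
  have hpos2 := (hV2 e he).1
  simp only [θ, h, q]
  rw [saddleSolution_one_sub h1fin heven1 h1Γ'.ne' hV1 he,
    saddleSolution_one_sub h2fin heven2 h2Γ'.ne' hV2 he,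
    finsum_mul_log_one_add_inv_pow h1fin heven1 hpos1.ne',
    finsum_mul_log_one_add_inv_pow h2fin heven2 hpos2.ne',
    log_inv, log_inv, sub_sub_cancel]
  field_simp
  ring

/-- For a left regular two edge type ensemble whose check node degree
distributions `Γ⁽¹⁾, Γ⁽²⁾` are supported on even degrees `≥ 2`, the growth-rate
function `θ` satisfies the symmetry `θ(1-e) = θ(e)` for all `e ∈ (0,1)`. -/
theorem theta_symmetry_even_checks
    (l1 l2 : ℕ) (hl1 : 0 < l1) (hl2 : 0 < l2)
    (Γ1 Γ2 : ℕ → ℝ) (Rdes : ℝ)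
    (h1nonneg : ∀ r, 0 ≤ Γ1 r) (h2nonneg : ∀ r, 0 ≤ Γ2 r)
    (h1fin : (Function.support Γ1).Finite) (h2fin : (Function.support Γ2).Finite)
    (h1sum : ∑ᶠ r, Γ1 r = 1) (h2sum : ∑ᶠ r, Γ2 r = 1)
    (h1deg : ∀ r, Γ1 r ≠ 0 → 2 ≤ r ∧ Even r)
    (h2deg : ∀ r, Γ2 r ≠ 0 → 2 ≤ r ∧ Even r)
    (h1Γ' : 0 < ∑ᶠ (r : ℕ), (r : ℝ) * Γ1 r)
    (h2Γ' : 0 < ∑ᶠ (r : ℕ), (r : ℝ) * Γ2 r)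
    (V1 V2 : ℝ → ℝ)
    -- V j is the unique positive solution of the saddle point equation for Γ j
    (hV1 : ∀ e ∈ Set.Ioo (0 : ℝ) 1,
      0 < V1 e ∧
      (V1 e / ∑ᶠ (r : ℕ), (r : ℝ) * Γ1 r) *
        (∑ᶠ (r : ℕ), (r : ℝ) * Γ1 r *
          (((1 + V1 e) ^ (r - 1) - (1 - V1 e) ^ (r - 1)) /
            ((1 + V1 e) ^ r + (1 - V1 e) ^ r))) = e ∧
      ∀ w, 0 < w →
        (w / ∑ᶠ (r : ℕ), (r : ℝ) * Γ1 r) *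
          (∑ᶠ (r : ℕ), (r : ℝ) * Γ1 r *
            (((1 + w) ^ (r - 1) - (1 - w) ^ (r - 1)) / ((1 + w) ^ r + (1 - w) ^ r))) = e
        → w = V1 e)
    (hV2 : ∀ e ∈ Set.Ioo (0 : ℝ) 1,
      0 < V2 e ∧
      (V2 e / ∑ᶠ (r : ℕ), (r : ℝ) * Γ2 r) *
        (∑ᶠ (r : ℕ), (r : ℝ) * Γ2 r *
          (((1 + V2 e) ^ (r - 1) - (1 - V2 e) ^ (r - 1)) /
            ((1 + V2 e) ^ r + (1 - V2 e) ^ r))) = e ∧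
      ∀ w, 0 < w →
        (w / ∑ᶠ (r : ℕ), (r : ℝ) * Γ2 r) *
          (∑ᶠ (r : ℕ), (r : ℝ) * Γ2 r *
            (((1 + w) ^ (r - 1) - (1 - w) ^ (r - 1)) / ((1 + w) ^ r + (1 - w) ^ r))) = e
        → w = V2 e) :
    (let h : ℝ → ℝ := fun e => -(e * Real.log e) - (1 - e) * Real.log (1 - e)
     let q : ℕ → ℝ → ℝ := fun r w => ((1 + w) ^ r + (1 - w) ^ r) / 2
     let θ : ℝ → ℝ := fun e =>
       (1 - (l1 : ℝ) - (l2 : ℝ)) * h e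
       + ((l1 : ℝ) / ∑ᶠ (r : ℕ), (r : ℝ) * Γ1 r) *
           (∑ᶠ (r : ℕ), Γ1 r * Real.log (q r (V1 e)))
       + ((l2 : ℝ) / ∑ᶠ (r : ℕ), (r : ℝ) * Γ2 r) *
           (∑ᶠ (r : ℕ), Γ2 r * Real.log (q r (V2 e)))
       - e * (l1 : ℝ) * Real.log (V1 e) - e * (l2 : ℝ) * Real.log (V2 e) - Rdes
     ∀ e ∈ Set.Ioo (0 : ℝ) 1, θ (1 - e) = θ e) :=
  theta_symmetry_even_checks_general l1 l2 Γ1 Γ2 Rdes h1fin h2fin h1deg h2deg h1Γ' h2Γ' V1 V2 hV1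
    hV2
end
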